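/- Let f ∈ C^∞(ℝ²) be analytic with radius of convergence Λ > 0. Then for every λ with 0 < λ < Λ, both series ‖f‖_{H,λ} = Σ_{n≥0} |f|_{λ,n}/(n!)² and |f|_{H,λ} = Σ_{n≥1} n² |f|_{λ,n}/(n!)² are finite (in particular each |f|_{λ,n} is finite). -/

import Mathlib

open scoped BigOperators Nat
open MeasureTheory Filter

noncomputable section

/-- Supremum norm over `ℝ²` of a function of two real variables. -/
def sup2 (f : ℝ → ℝ → ℝ) : ℝ := ⨆ x : ℝ, ⨆ v : ℝ, |f x v|

/-- Supremum norm over `ℝ`. -/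
def sup1 (f : ℝ → ℝ) : ℝ := ⨆ x : ℝ, |f x|

/-- Mixed partial derivative `∂ₓᵏ ∂ᵥˡ f`. -/
def D2 (k l : ℕ) (f : ℝ → ℝ → ℝ) : ℝ → ℝ → ℝ :=
  fun x v => iteratedDeriv k (fun y => iteratedDeriv l (f y) v) x

/-- The coefficient `((k+l)!/(k+l-n)!) · λ^{k+l-n}/(k! l!)` for `k+l ≥ n`, else `0`. -/
def acoeff (lam : ℝ) (n k l : ℕ) : ℝ :=
  if n ≤ k + l then
    ((k + l).factorial : ℝ) / ((k + l - n).factorial : ℝ) * lam ^ (k + l - n)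
      / ((k.factorial : ℝ) * (l.factorial : ℝ))
  else 0

/-- `|f|_{λ,n}` for functions of two variables. -/
def pn2 (lam : ℝ) (n : ℕ) (f : ℝ → ℝ → ℝ) : ℝ :=
  ∑' p : ℕ × ℕ, acoeff lam n p.1 p.2 * sup2 (D2 p.1 p.2 f)

/-- `|ρ|_{λ,n}` for functions of one variable. -/
def pn1 (lam : ℝ) (n : ℕ) (ρ : ℝ → ℝ) : ℝ :=
  ∑' k : ℕ, acoeff lam n k 0 * sup1 (iteratedDeriv k ρ)

/-- `‖f‖_{H,λ}`. -/
def Hnorm2 (lam : ℝ) (f : ℝ → ℝ → ℝ) : ℝ :=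
  ∑' n : ℕ, (1 / ((n.factorial : ℝ)) ^ 2) * pn2 lam n f

/-- `|f|_{H,λ}`. -/
def Hsemi2 (lam : ℝ) (f : ℝ → ℝ → ℝ) : ℝ :=
  ∑' n : ℕ, ((n : ℝ) ^ 2 / ((n.factorial : ℝ)) ^ 2) * pn2 lam n f

/-- `‖ρ‖_{H,λ}` (one variable). -/
def Hnorm1 (lam : ℝ) (ρ : ℝ → ℝ) : ℝ :=
  ∑' n : ℕ, (1 / ((n.factorial : ℝ)) ^ 2) * pn1 lam n ρ

/-- `|ρ|_{H,λ}` (one variable). -/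
def Hsemi1 (lam : ℝ) (ρ : ℝ → ℝ) : ℝ :=
  ∑' n : ℕ, ((n : ℝ) ^ 2 / ((n.factorial : ℝ)) ^ 2) * pn1 lam n ρ

/-- Analyticity with radius of convergence `Λ` for functions on `ℝ²`. -/
def AnalyticRad2 (Λ : ℝ) (f : ℝ → ℝ → ℝ) : Prop :=
  ContDiff ℝ (⊤ : ℕ∞) (fun p : ℝ × ℝ => f p.1 p.2) ∧
    ∃ C > 0, ∀ k l : ℕ,
      Λ ^ (k + l) / ((k.factorial : ℝ) * (l.factorial : ℝ)) * sup2 (D2 k l f) ≤ C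

/-- Analyticity with radius of convergence `Λ` for functions on `ℝ`. -/
def AnalyticRad1 (Λ : ℝ) (ρ : ℝ → ℝ) : Prop :=
  ContDiff ℝ (⊤ : ℕ∞) ρ ∧
    ∃ C > 0, ∀ k : ℕ, Λ ^ k / (k.factorial : ℝ) * sup1 (iteratedDeriv k ρ) ≤ C

/-- `α(v) = -2v/(1+v²)`. -/
def alphaFn : ℝ → ℝ := fun v => -2 * v / (1 + v ^ 2)

/-!
Analyticity bounds `‖∂ₓᵏ∂ᵥˡ f‖_∞ ≤ C k! l! / Λ^{k+l}`. Writing `m = k + l`, the weight of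
`|f|_{λ,n}` turns this into `C · C(m,n) n! λ^{m-n} / Λ^m`, and the single binomial term
`C(m,n) t^n λ^{m-n}` is at most `(t + λ)^m`. With `t = (Λ - λ)/2` this gives
`|f|_{λ,n} ≤ C' n! / t^n` by a geometric double series in `r = (t + λ)/Λ < 1`. Since both `1`
and `n²` are at most `4ⁿ`, the terms of `‖f‖_{H,λ}` and `|f|_{H,λ}` are then dominated by the
exponential series `C' (4/t)ⁿ / n!`.
-/

open Finset in
theorem choose_mul_pow_mul_pow_le_add_pow {x y : ℝ} (hx : 0 ≤ x) (hy : 0 ≤ y) (m n : ℕ) :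
    (m.choose n : ℝ) * x ^ n * y ^ (m - n) ≤ (x + y) ^ m := by
  rcases le_or_gt n m with h | h
  · rw [add_pow]
    calc (m.choose n : ℝ) * x ^ n * y ^ (m - n) = x ^ n * y ^ (m - n) * m.choose n := by ring
      _ ≤ ∑ j ∈ range (m + 1), x ^ j * y ^ (m - j) * m.choose j :=
        single_le_sum (f := fun j => x ^ j * y ^ (m - j) * (m.choose j : ℝ))
          (fun j _ => by positivity) (mem_range.2 (Nat.lt_succ_of_le h))
  · simp only [Nat.choose_eq_zero_of_lt h, Nat.cast_zero, zero_mul]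
    positivity

theorem sup2_nonneg (f : ℝ → ℝ → ℝ) : 0 ≤ sup2 f :=
  Real.iSup_nonneg fun _ => Real.iSup_nonneg fun _ => abs_nonneg _

theorem acoeff_nonneg {lam : ℝ} (hlam : 0 ≤ lam) (n k l : ℕ) : 0 ≤ acoeff lam n k l := by
  unfold acoeff
  split_ifs <;> positivity

theorem acoeff_mul_factorial_mul_factorial (lam : ℝ) {n k l : ℕ} (h : n ≤ k + l) :
    acoeff lam n k l * (k ! * l ! : ℝ) =
      (k + l).choose n * n ! * lam ^ (k + l - n) := by
  rw [acoeff, if_pos h, div_mul_cancel₀ _ (by positivity),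
    ← Nat.choose_mul_factorial_mul_factorial h]
  push_cast
  field_simp

theorem acoeff_mul_le_of_le {lam t Λ C a : ℝ} {n k l : ℕ} (hlam : 0 ≤ lam) (ht : 0 < t)
    (hΛ : 0 < Λ) (ha : 0 ≤ a) (hC : Λ ^ (k + l) / (k ! * l !) * a ≤ C) :
    acoeff lam n k l * a ≤ C * n ! / t ^ n * ((t + lam) / Λ) ^ (k + l) := by
  have hC0 : 0 ≤ C := le_trans (by positivity) hC
  by_cases h : n ≤ k + l
  · have ha' : a ≤ C * (k ! * l !) / Λ ^ (k + l) := by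
      rw [le_div_iff₀ (by positivity)]
      rw [div_mul_eq_mul_div, div_le_iff₀ (by positivity)] at hC
      linarith
    have hbin :
        ((k + l).choose n : ℝ) * lam ^ (k + l - n) ≤ (t + lam) ^ (k + l) / t ^ n := by
      rw [le_div_iff₀ (by positivity)]
      linarith [choose_mul_pow_mul_pow_le_add_pow ht.le hlam (k + l) n]
    calc acoeff lam n k l * a ≤ acoeff lam n k l * (C * (k ! * l !) / Λ ^ (k + l)) := by
          gcongr
          exact acoeff_nonneg hlam n k l
      _ = C * n ! * ((k + l).choose n * lam ^ (k + l - n)) / Λ ^ (k + l) := by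
          rw [mul_div_assoc', mul_left_comm, acoeff_mul_factorial_mul_factorial lam h]
          ring
      _ ≤ C * n ! * ((t + lam) ^ (k + l) / t ^ n) / Λ ^ (k + l) := by gcongr
      _ = C * n ! / t ^ n * ((t + lam) / Λ) ^ (k + l) := by
          rw [div_pow]
          ring
  · rw [acoeff, if_neg h, zero_mul]
    positivity

theorem AnalyticRad2.exists_acoeff_mul_sup2_le {Λ lam : ℝ} {f : ℝ → ℝ → ℝ}
    (hf : AnalyticRad2 Λ f) (hlam : 0 ≤ lam) (hlamΛ : lam < Λ) :
    ∃ C t r : ℝ, 0 < t ∧ 0 ≤ r ∧ r < 1 ∧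
      ∀ n k l, acoeff lam n k l * sup2 (D2 k l f) ≤ C * n ! / t ^ n * r ^ (k + l) := by
  obtain ⟨-, C, -, hC⟩ := hf
  have hΛ : 0 < Λ := hlam.trans_lt hlamΛ
  -- `t` is half the gap, so that `(t + λ) / Λ = (Λ + λ) / (2Λ) < 1`.
  refine ⟨C, (Λ - lam) / 2, ((Λ - lam) / 2 + lam) / Λ, by linarith, by positivity, ?_,
    fun n k l => acoeff_mul_le_of_le hlam (by linarith) hΛ (sup2_nonneg _) (hC k l)⟩
  rw [div_lt_one hΛ]
  linarith

theorem summable_pow_add {r : ℝ} (hr0 : 0 ≤ r) (hr1 : r < 1) :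
    Summable (fun p : ℕ × ℕ => r ^ (p.1 + p.2)) := by
  simp_rw [pow_add]
  have hgeo := summable_geometric_of_lt_one hr0 hr1
  exact hgeo.mul_of_nonneg hgeo (fun _ => by positivity) (fun _ => by positivity)

theorem tsum_pow_add {r : ℝ} (hr0 : 0 ≤ r) (hr1 : r < 1) :
    ∑' p : ℕ × ℕ, r ^ (p.1 + p.2) = ((1 - r)⁻¹) ^ 2 := by
  have hgeo : Summable (fun n : ℕ => ‖r ^ n‖) := by
    simpa [abs_of_nonneg (pow_nonneg hr0 _)] using summable_geometric_of_lt_one hr0 hr1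
  simp_rw [pow_add]
  rw [← tsum_mul_tsum_of_summable_norm hgeo hgeo, tsum_geometric_of_lt_one hr0 hr1, sq]

theorem summable_and_tsum_le_of_le_pow_add {g : ℕ × ℕ → ℝ} {A r : ℝ} (hg0 : ∀ p, 0 ≤ g p)
    (hr0 : 0 ≤ r) (hr1 : r < 1) (hg : ∀ p, g p ≤ A * r ^ (p.1 + p.2)) :
    Summable g ∧ ∑' p, g p ≤ A * ((1 - r)⁻¹) ^ 2 := by
  have hmaj := (summable_pow_add hr0 hr1).mul_left A
  refine ⟨hmaj.of_nonneg_of_le hg0 hg, ?_⟩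
  calc ∑' p, g p ≤ ∑' p : ℕ × ℕ, A * r ^ (p.1 + p.2) :=
        (hmaj.of_nonneg_of_le hg0 hg).tsum_le_tsum hg hmaj
    _ = A * ((1 - r)⁻¹) ^ 2 := by rw [tsum_mul_left, tsum_pow_add hr0 hr1]

theorem summable_mul_of_le_factorial_div_pow {w p : ℕ → ℝ} {D t : ℝ} (ht : 0 < t)
    (hw0 : ∀ n, 0 ≤ w n) (hw : ∀ n, w n ≤ 4 ^ n / (n ! : ℝ) ^ 2)
    (hp0 : ∀ n, 0 ≤ p n) (hp : ∀ n, p n ≤ D * n ! / t ^ n) :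
    Summable (fun n => w n * p n) := by
  refine ((Real.summable_pow_div_factorial (4 / t)).mul_left D).of_nonneg_of_le
    (fun n => mul_nonneg (hw0 n) (hp0 n)) fun n => ?_
  calc w n * p n ≤ 4 ^ n / (n ! : ℝ) ^ 2 * (D * n ! / t ^ n) :=
        mul_le_mul (hw n) (hp n) (hp0 n) (by positivity)
    _ = D * ((4 / t) ^ n / n !) := by
        rw [div_pow]
        field_simp

theorem sq_le_four_pow (n : ℕ) : (n : ℝ) ^ 2 ≤ 4 ^ n := by
  calc (n : ℝ) ^ 2 ≤ ((2 : ℝ) ^ n) ^ 2 := by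
        gcongr
        exact_mod_cast (Nat.lt_two_pow_self (n := n)).le
    _ = 4 ^ n := by rw [← pow_mul, mul_comm, pow_mul]; norm_num

theorem Hnorm_Hsemi_finite_general (f : ℝ → ℝ → ℝ) (Λ : ℝ)
    (hf : AnalyticRad2 Λ f) (lam : ℝ) (hlam0 : 0 < lam) (hlamΛ : lam < Λ) :
    (∀ n : ℕ, Summable (fun p : ℕ × ℕ => acoeff lam n p.1 p.2 * sup2 (D2 p.1 p.2 f))) ∧
    Summable (fun n : ℕ => (1 / ((n.factorial : ℝ)) ^ 2) * pn2 lam n f) ∧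
    Summable (fun n : ℕ => ((n : ℝ) ^ 2 / ((n.factorial : ℝ)) ^ 2) * pn2 lam n f) := by
  obtain ⟨C, t, r, ht, hr0, hr1, hbound⟩ := hf.exists_acoeff_mul_sup2_le hlam0.le hlamΛ
  have hterm0 : ∀ n (p : ℕ × ℕ), 0 ≤ acoeff lam n p.1 p.2 * sup2 (D2 p.1 p.2 f) :=
    fun n p => mul_nonneg (acoeff_nonneg hlam0.le _ _ _) (sup2_nonneg _)
  have hpn n := summable_and_tsum_le_of_le_pow_add (A := C * n ! / t ^ n) (hterm0 n) hr0 hr1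
    fun p => hbound n p.1 p.2
  have hpn0 n : 0 ≤ pn2 lam n f := tsum_nonneg (hterm0 n)
  have hpn_le n : pn2 lam n f ≤ C * (1 - r)⁻¹ ^ 2 * n ! / t ^ n :=
    (hpn n).2.trans_eq (by ring)
  refine ⟨fun n => (hpn n).1, ?_, ?_⟩
  · refine summable_mul_of_le_factorial_div_pow ht (fun n => by positivity) (fun n => ?_)
      hpn0 hpn_le
    gcongr
    exact one_le_pow₀ (by norm_num)
  · refine summable_mul_of_le_factorial_div_pow ht (fun n => by positivity) (fun n => ?_)
      hpn0 hpn_le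
    gcongr
    exact sq_le_four_pow n

/-- If `f ∈ C^∞(ℝ²)` is analytic with radius of convergence `Λ > 0`, then for
`0 < λ < Λ` both series `‖f‖_{H,λ}` and `|f|_{H,λ}` are finite (and in particular
each `|f|_{λ,n}` is finite, i.e. the defining series converge). -/
theorem Hnorm_Hsemi_finite (f : ℝ → ℝ → ℝ) (Λ : ℝ) (hΛ : 0 < Λ)
    (hf : AnalyticRad2 Λ f) (lam : ℝ) (hlam0 : 0 < lam) (hlamΛ : lam < Λ) :
    (∀ n : ℕ, Summable (fun p : ℕ × ℕ => acoeff lam n p.1 p.2 * sup2 (D2 p.1 p.2 f))) ∧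
    Summable (fun n : ℕ => (1 / ((n.factorial : ℝ)) ^ 2) * pn2 lam n f) ∧
    Summable (fun n : ℕ => ((n : ℝ) ^ 2 / ((n.factorial : ℝ)) ^ 2) * pn2 lam n f) :=
  Hnorm_Hsemi_finite_general f Λ hf lam hlam0 hlamΛ
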